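/- arXiv:2509.22452 — 6 statements merged into one kernel-verified Lean document; each statement's English description precedes it below -/
import Mathlib

section
/- With β̂_OLS and â_OLS as above, and additionally α̂_OLS := M⁻¹ · w where w_j = (1/n)∑_i m1(O_i, φ_j) and b̂_OLS(z) := α̂_OLS ᵀ φ(z), the one-step estimator satisfies χ̂(â_OLS, b̂_OLS) = (1/n)∑_i m1(O_i, â_OLS) = (1/n)∑_i m2(O_i, b̂_OLS); that is, it equals both the outcome-regression estimator and the IPW-type estimator. -/
lemma msum {Z : Type*} {ι : Type*} (m : (Z → ℝ) → ℝ)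
    (hm : ∀ (c : ℝ) (f g : Z → ℝ), m (fun x => c * f x + g x) = c * m f + m g)
    (s : Finset ι) (c : ι → ℝ) (f : ι → Z → ℝ) :
    m (fun x => ∑ j ∈ s, c j * f j x) = ∑ j ∈ s, c j * m (f j) := by
  classical
  induction s using Finset.induction with
  | empty =>
      simp only [Finset.sum_empty]
      have h := hm 1 (fun _ => (0:ℝ)) (fun _ => (0:ℝ))
      simp only [mul_zero, add_zero, one_mul, zero_add] at h
      linarith
  | @insert a s hx ih =>
      rw [show (fun x => ∑ j ∈ insert a s, c j * f j x)
            = fun x => c a * f a x + ∑ j ∈ s, c j * f j x from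
          funext fun x => Finset.sum_insert hx, hm, ih, Finset.sum_insert hx]

lemma triple_swap {α β γ : Type*} [Fintype α] [Fintype β] [Fintype γ]
    (f : α → β → γ → ℝ) :
    ∑ i, ∑ j, ∑ k, f i j k = ∑ j, ∑ k, ∑ i, f i j k := by
  rw [Finset.sum_comm]
  exact Finset.sum_congr rfl fun j _ => Finset.sum_comm

theorem stmt_3 {Z : Type*} (n d : ℕ) (S : Fin n → ℝ) (z : Fin n → Z)
    (φ : Fin d → Z → ℝ) (m1 m2 : Fin n → (Z → ℝ) → ℝ)
    (hm1 : ∀ i (c : ℝ) (f g : Z → ℝ),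
      m1 i (fun x => c * f x + g x) = c * m1 i f + m1 i g)
    (hm2 : ∀ i (c : ℝ) (f g : Z → ℝ),
      m2 i (fun x => c * f x + g x) = c * m2 i f + m2 i g)
    (M : Matrix (Fin d) (Fin d) ℝ)
    (hM : ∀ j k, M j k = (1 / (n : ℝ)) * ∑ i, (-S i) * φ j (z i) * φ k (z i))
    (hMinv : IsUnit M.det)
    (v w : Fin d → ℝ)
    (hv : ∀ j, v j = (1 / (n : ℝ)) * ∑ i, m2 i (φ j))
    (hw : ∀ j, w j = (1 / (n : ℝ)) * ∑ i, m1 i (φ j))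
    (βOLS αOLS : Fin d → ℝ) (hβ : βOLS = M⁻¹.mulVec v) (hα : αOLS = M⁻¹.mulVec w)
    (aOLS bOLS : Z → ℝ)
    (ha : ∀ x, aOLS x = ∑ j, βOLS j * φ j x)
    (hb : ∀ x, bOLS x = ∑ j, αOLS j * φ j x) :
    (1 / (n : ℝ)) * ∑ i, (S i * aOLS (z i) * bOLS (z i) + m1 i aOLS + m2 i bOLS)
        = (1 / (n : ℝ)) * ∑ i, m1 i aOLS
      ∧ (1 / (n : ℝ)) * ∑ i, (S i * aOLS (z i) * bOLS (z i) + m1 i aOLS + m2 i bOLS)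
        = (1 / (n : ℝ)) * ∑ i, m2 i bOLS := by
  have haf : aOLS = fun x => ∑ j, βOLS j * φ j x := funext ha
  have hbf : bOLS = fun x => ∑ j, αOLS j * φ j x := funext hb
  set E : ℝ := ∑ j, ∑ k, βOLS j * αOLS k * M j k with hE
  have hMv : M.mulVec βOLS = v := by
    rw [hβ, Matrix.mulVec_mulVec, Matrix.mul_nonsing_inv _ hMinv, Matrix.one_mulVec]
  have hMw : M.mulVec αOLS = w := by
    rw [hα, Matrix.mulVec_mulVec, Matrix.mul_nonsing_inv _ hMinv, Matrix.one_mulVec]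
  have hsym : ∀ j k, M j k = M k j := by
    intro j k
    rw [hM, hM]
    congr 1
    exact Finset.sum_congr rfl fun i _ => by ring
  -- m1 part
  have h1 : (1 / (n : ℝ)) * ∑ i, m1 i aOLS = E := by
    calc (1 / (n : ℝ)) * ∑ i, m1 i aOLS
        = (1 / (n : ℝ)) * ∑ i, ∑ j, βOLS j * m1 i (φ j) := by
          rw [haf]
          congr 1
          exact Finset.sum_congr rfl fun i _ => msum _ (hm1 i) _ _ _
      _ = ∑ j, βOLS j * w j := by
          rw [Finset.sum_comm, Finset.mul_sum]
          refine Finset.sum_congr rfl fun j _ => ?_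
          rw [hw, ← Finset.mul_sum]
          ring
      _ = E := by
          rw [← hMw, hE]
          refine Finset.sum_congr rfl fun j _ => ?_
          simp only [Matrix.mulVec, dotProduct, Finset.mul_sum]
          exact Finset.sum_congr rfl fun k _ => by ring
  -- m2 part
  have h2 : (1 / (n : ℝ)) * ∑ i, m2 i bOLS = E := by
    calc (1 / (n : ℝ)) * ∑ i, m2 i bOLS
        = (1 / (n : ℝ)) * ∑ i, ∑ k, αOLS k * m2 i (φ k) := by
          rw [hbf]
          congr 1
          exact Finset.sum_congr rfl fun i _ => msum _ (hm2 i) _ _ _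
      _ = ∑ k, αOLS k * v k := by
          rw [Finset.sum_comm, Finset.mul_sum]
          refine Finset.sum_congr rfl fun k _ => ?_
          rw [hv, ← Finset.mul_sum]
          ring
      _ = E := by
          rw [← hMv, hE, Finset.sum_comm]
          refine Finset.sum_congr rfl fun k _ => ?_
          simp only [Matrix.mulVec, dotProduct, Finset.mul_sum]
          refine Finset.sum_congr rfl fun j _ => ?_
          rw [show M k j = M j k from (hsym j k).symm]
          ring
  -- quadratic part
  have h3 : (1 / (n : ℝ)) * ∑ i, S i * aOLS (z i) * bOLS (z i) = -E := by
    calc (1 / (n : ℝ)) * ∑ i, S i * aOLS (z i) * bOLS (z i)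
        = (1 / (n : ℝ)) * ∑ i, ∑ j, ∑ k,
            βOLS j * αOLS k * (S i * φ j (z i) * φ k (z i)) := by
          congr 1
          refine Finset.sum_congr rfl fun i _ => ?_
          rw [ha, hb, mul_assoc, Finset.sum_mul_sum, Finset.mul_sum]
          refine Finset.sum_congr rfl fun j _ => ?_
          rw [Finset.mul_sum]
          exact Finset.sum_congr rfl fun k _ => by ring
      _ = ∑ j, ∑ k, βOLS j * αOLS k * (-(M j k)) := by
          rw [triple_swap, Finset.mul_sum]
          refine Finset.sum_congr rfl fun j _ => ?_
          rw [Finset.mul_sum]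
          refine Finset.sum_congr rfl fun k _ => ?_
          rw [← Finset.mul_sum, hM]
          have hne : ∑ i, (-S i) * φ j (z i) * φ k (z i)
              = -∑ i, S i * φ j (z i) * φ k (z i) := by
            rw [← Finset.sum_neg_distrib]
            exact Finset.sum_congr rfl fun i _ => by ring
          rw [hne]
          ring
      _ = -E := by
          rw [hE, ← Finset.sum_neg_distrib]
          refine Finset.sum_congr rfl fun j _ => ?_
          rw [← Finset.sum_neg_distrib]
          exact Finset.sum_congr rfl fun k _ => by ring
  have htot : (1 / (n : ℝ)) * ∑ i, (S i * aOLS (z i) * bOLS (z i) + m1 i aOLS + m2 i bOLS) = E := by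
    rw [Finset.sum_add_distrib, Finset.sum_add_distrib, mul_add, mul_add, h1, h2, h3]
    ring
  exact ⟨by rw [htot, h1], by rw [htot, h2]⟩
end

section
/- (Generalization of Proposition 3.2 of Bruns-Smith et al. to the mixed bias class.) Let β̂ ∈ ℝ^d be any vector with â(z) := ∑_j β̂_j φ_j(z), and let b̂ : Z → ℝ be any function. Let β̃ satisfy (1/n)∑_i [S_i·b̂(z_i)·(β̃ᵀφ(z_i)) + m2(O_i, b̂)] = 0. For each j with (1/n)∑_i m1(O_i, φ_j) ≠ 0, define γ_j := [(1/n)∑_i (−S_i)·b̂(z_i)·φ_j(z_i)] / [(1/n)∑_i m1(O_i, φ_j)], and set β̃_aug,j := (1−γ_j)β̂_j + γ_j β̃_j and ã_aug(z) := ∑_j β̃_aug,j φ_j(z). Then the one-step estimator χ̂(â,b̂) := (1/n)∑_i [S_i·â(z_i)·b̂(z_i) + m1(O_i, â) + m2(O_i, b̂)] equals the outcome-regression estimator (1/n)∑_i m1(O_i, ã_aug). -/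
/-!
Everything is linear in the coefficient vectors. Write `M j` for the mean of `m1 i (φ j)` and
`C j` for the mean of `S i * b̂ (z i) * φ j (z i)`. The definition of `γ j` says `γ j * M j = -C j`,
so `β̃_aug j * M j = β̂ j * M j + (β̂ j - β̃ j) * C j`. Summed over `j`, the `β̂` terms are the
outcome-regression and weighting parts of the one-step estimator, and the `β̃` term is its `m2`
part by the defining equation of `β̃`.
-/

open Finset

theorem map_sum_mul_of_linear {R Z ι : Type*} [Ring R] (m : (Z → R) → R)
    (hm : ∀ (c : R) (f g : Z → R), m (fun x => c * f x + g x) = c * m f + m g)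
    (s : Finset ι) (c : ι → R) (φ : ι → Z → R) :
    m (fun x => ∑ j ∈ s, c j * φ j x) = ∑ j ∈ s, c j * m (φ j) := by
  classical
  induction s using Finset.induction_on with
  | empty =>
    have h := hm 1 (fun _ => 0) (fun _ => 0)
    simpa using h
  | insert a s ha ih =>
    simp only [sum_insert ha, ← ih, ← hm]

theorem mul_sum_sum_mul_comm {R ι κ : Type*} [CommSemiring R] (a : R) (s : Finset ι)
    (t : Finset κ) (c : ι → R) (f : κ → ι → R) :
    a * ∑ i ∈ t, ∑ j ∈ s, c j * f i j = ∑ j ∈ s, c j * (a * ∑ i ∈ t, f i j) := by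
  simp only [mul_sum]
  rw [sum_comm]
  exact sum_congr rfl fun j _ => sum_congr rfl fun i _ => by ring

theorem stmt_5_general {Z : Type*} (n d : ℕ) (S : Fin n → ℝ) (z : Fin n → Z)
    (φ : Fin d → Z → ℝ) (m1 m2 : Fin n → (Z → ℝ) → ℝ)
    (hm1 : ∀ i (c : ℝ) (f g : Z → ℝ),
      m1 i (fun x => c * f x + g x) = c * m1 i f + m1 i g)
    (hden : ∀ j, (1 / (n : ℝ)) * ∑ i, m1 i (φ j) ≠ 0)
    (βh : Fin d → ℝ) (ahat : Z → ℝ) (hahat : ∀ x, ahat x = ∑ j, βh j * φ j x)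
    (bhat : Z → ℝ) (βt : Fin d → ℝ)
    (hβt : (1 / (n : ℝ)) * ∑ i,
      (S i * bhat (z i) * (∑ j, βt j * φ j (z i)) + m2 i bhat) = 0)
    (γ : Fin d → ℝ)
    (hγ : ∀ j, γ j = ((1 / (n : ℝ)) * ∑ i, (-S i) * bhat (z i) * φ j (z i))
        / ((1 / (n : ℝ)) * ∑ i, m1 i (φ j)))
    (βaug : Fin d → ℝ) (hβaug : ∀ j, βaug j = (1 - γ j) * βh j + γ j * βt j)
    (aaug : Z → ℝ) (haaug : ∀ x, aaug x = ∑ j, βaug j * φ j x) :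
    (1 / (n : ℝ)) * ∑ i, (S i * ahat (z i) * bhat (z i) + m1 i ahat + m2 i bhat)
      = (1 / (n : ℝ)) * ∑ i, m1 i aaug := by
  set M : Fin d → ℝ := fun j => (1 / (n : ℝ)) * ∑ i, m1 i (φ j)
  set C : Fin d → ℝ := fun j => (1 / (n : ℝ)) * ∑ i, S i * bhat (z i) * φ j (z i)
  have hM (c : Fin d → ℝ) :
      (1 / (n : ℝ)) * ∑ i, m1 i (fun x => ∑ j, c j * φ j x) = ∑ j, c j * M j := by
    simp only [map_sum_mul_of_linear _ (hm1 _)]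
    exact mul_sum_sum_mul_comm ..
  have hC (c : Fin d → ℝ) :
      (1 / (n : ℝ)) * ∑ i, S i * bhat (z i) * ∑ j, c j * φ j (z i) = ∑ j, c j * C j := by
    rw [← mul_sum_sum_mul_comm]
    refine congrArg _ (sum_congr rfl fun i _ => ?_)
    rw [mul_sum]
    exact sum_congr rfl fun j _ => by ring
  have hγM (j : Fin d) : γ j * M j = -C j := by
    rw [hγ j, div_mul_cancel₀ _ (hden j)]
    simp only [C, neg_mul, sum_neg_distrib, mul_neg]
  have hkey (j : Fin d) : βaug j * M j = βh j * M j + βh j * C j - βt j * C j := by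
    linear_combination (βt j - βh j) * hγM j + M j * hβaug j
  simp_rw [mul_right_comm (S _) (ahat _)]
  obtain rfl : ahat = _ := funext hahat
  obtain rfl : aaug = _ := funext haaug
  simp only [sum_add_distrib, mul_add] at hβt ⊢
  rw [hC, hM, hM, sum_congr rfl fun j _ => hkey j, sum_sub_distrib, sum_add_distrib]
  rw [hC] at hβt
  linarith

theorem stmt_5 {Z : Type*} (n d : ℕ) (S : Fin n → ℝ) (z : Fin n → Z)
    (φ : Fin d → Z → ℝ) (m1 m2 : Fin n → (Z → ℝ) → ℝ)
    (hm1 : ∀ i (c : ℝ) (f g : Z → ℝ),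
      m1 i (fun x => c * f x + g x) = c * m1 i f + m1 i g)
    (hm2 : ∀ i (c : ℝ) (f g : Z → ℝ),
      m2 i (fun x => c * f x + g x) = c * m2 i f + m2 i g)
    (hden : ∀ j, (1 / (n : ℝ)) * ∑ i, m1 i (φ j) ≠ 0)
    (βh : Fin d → ℝ) (ahat : Z → ℝ) (hahat : ∀ x, ahat x = ∑ j, βh j * φ j x)
    (bhat : Z → ℝ) (βt : Fin d → ℝ)
    (hβt : (1 / (n : ℝ)) * ∑ i,
      (S i * bhat (z i) * (∑ j, βt j * φ j (z i)) + m2 i bhat) = 0)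
    (γ : Fin d → ℝ)
    (hγ : ∀ j, γ j = ((1 / (n : ℝ)) * ∑ i, (-S i) * bhat (z i) * φ j (z i))
        / ((1 / (n : ℝ)) * ∑ i, m1 i (φ j)))
    (βaug : Fin d → ℝ) (hβaug : ∀ j, βaug j = (1 - γ j) * βh j + γ j * βt j)
    (aaug : Z → ℝ) (haaug : ∀ x, aaug x = ∑ j, βaug j * φ j x) :
    (1 / (n : ℝ)) * ∑ i, (S i * ahat (z i) * bhat (z i) + m1 i ahat + m2 i bhat)
      = (1 / (n : ℝ)) * ∑ i, m1 i aaug :=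
  stmt_5_general n d S z φ m1 m2 hm1 hden βh ahat hahat bhat βt hβt γ hγ βaug hβaug aaug haaug
end

section
/- (Symmetric version.) Let α̂ ∈ ℝ^d be any vector with b̂(z) := ∑_j α̂_j φ_j(z), and let â : Z → ℝ be any function. Let α̃ satisfy (1/n)∑_i [S_i·â(z_i)·(α̃ᵀφ(z_i)) + m1(O_i, â)] = 0. Define δ_j := [(1/n)∑_i (−S_i)·â(z_i)·φ_j(z_i)] / [(1/n)∑_i m2(O_i, φ_j)], assumed well-defined, and set α̃_aug,j := (1−δ_j)α̂_j + δ_j α̃_j, b̃_aug(z) := ∑_j α̃_aug,j φ_j(z). Then the one-step estimator χ̂(â,b̂) equals the IPW-type estimator (1/n)∑_i m2(O_i, b̃_aug). -/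
/-!
Write `E f := ∑ᵢ Sᵢ â(zᵢ) f(zᵢ)` and `P f := ∑ᵢ m2(Oᵢ, f)`; both are linear in `f`, and
`χ̂(â, b̂)` is `(E b̂ + ∑ᵢ m1(Oᵢ, â) + P b̂) / n`. Each `δⱼ` is chosen so that
`δⱼ P(φⱼ) = -E(φⱼ)`, hence `P(b̃_aug - b̂) = ∑ⱼ (α̃ⱼ - α̂ⱼ) δⱼ P(φⱼ) = E(b̂) - E(b̃)`, and the
defining equation of `α̃` says `-E(b̃) = ∑ᵢ m1(Oᵢ, â)`.
-/

open Finset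

section LinearFunctionals

variable {Z ι : Type*}

def linearMapOfMapMulAdd (m : (Z → ℝ) → ℝ)
    (hm : ∀ (c : ℝ) (f g : Z → ℝ), m (fun x => c * f x + g x) = c * m f + m g) :
    (Z → ℝ) →ₗ[ℝ] ℝ where
  toFun := m
  map_add' f g := by
    have h := hm 1 f g
    simp only [one_mul] at h
    exact h
  map_smul' c f := by
    have hzero : m 0 = 0 := by
      have h := hm 1 0 0
      simp only [Pi.zero_apply, mul_zero, add_zero, one_mul] at h
      linarith [show m 0 = m 0 + m 0 from h]
    have h := hm c f 0
    simp only [Pi.zero_apply, add_zero, hzero] at h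
    exact h

@[simp]
lemma linearMapOfMapMulAdd_apply (m : (Z → ℝ) → ℝ)
    (hm : ∀ (c : ℝ) (f g : Z → ℝ), m (fun x => c * f x + g x) = c * m f + m g) (f : Z → ℝ) :
    linearMapOfMapMulAdd m hm f = m f :=
  rfl

def empiricalFunctional [Fintype ι] (w : ι → ℝ) (z : ι → Z) : (Z → ℝ) →ₗ[ℝ] ℝ :=
  ∑ i, w i • LinearMap.proj (z i)

@[simp]
lemma empiricalFunctional_apply [Fintype ι] (w : ι → ℝ) (z : ι → Z) (f : Z → ℝ) :
    empiricalFunctional w z f = ∑ i, w i * f (z i) := by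
  simp [empiricalFunctional, LinearMap.sum_apply]

lemma linearCombination_eq_sum_smul [Fintype ι] (c : ι → ℝ) (φ : ι → Z → ℝ) :
    (fun x => ∑ j, c j * φ j x) = ∑ j, c j • φ j := by
  ext x
  simp [Finset.sum_apply]

theorem add_add_eq_map_augmented {V : Type*} [AddCommGroup V] [Module ℝ V] [Fintype ι]
    (E P : V →ₗ[ℝ] ℝ) (φ : ι → V) (K : ℝ) (αh αt δ : ι → ℝ)
    (hαt : E (∑ j, αt j • φ j) + K = 0) (hδ : ∀ j, δ j * P (φ j) = -E (φ j)) :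
    E (∑ j, αh j • φ j) + K + P (∑ j, αh j • φ j)
      = P (∑ j, ((1 - δ j) * αh j + δ j * αt j) • φ j) := by
  simp only [map_sum, map_smul, smul_eq_mul] at hαt ⊢
  have hterm : ∀ j, ((1 - δ j) * αh j + δ j * αt j) * P (φ j)
      = αh j * P (φ j) + (αh j * E (φ j) - αt j * E (φ j)) := fun j => by
    linear_combination (αt j - αh j) * hδ j
  rw [sum_congr rfl fun j _ => hterm j, sum_add_distrib, sum_sub_distrib]
  linear_combination hαt

end LinearFunctionals

theorem stmt_6_general {Z : Type*} (n d : ℕ) (S : Fin n → ℝ) (z : Fin n → Z)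
    (φ : Fin d → Z → ℝ) (m1 m2 : Fin n → (Z → ℝ) → ℝ)
    (hm2 : ∀ i (c : ℝ) (f g : Z → ℝ),
      m2 i (fun x => c * f x + g x) = c * m2 i f + m2 i g)
    (hden : ∀ j, (1 / (n : ℝ)) * ∑ i, m2 i (φ j) ≠ 0)
    (αh : Fin d → ℝ) (bhat : Z → ℝ) (hbhat : ∀ x, bhat x = ∑ j, αh j * φ j x)
    (ahat : Z → ℝ) (αt : Fin d → ℝ)
    (hαt : (1 / (n : ℝ)) * ∑ i,
      (S i * ahat (z i) * (∑ j, αt j * φ j (z i)) + m1 i ahat) = 0)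
    (δ : Fin d → ℝ)
    (hδ : ∀ j, δ j = ((1 / (n : ℝ)) * ∑ i, (-S i) * ahat (z i) * φ j (z i))
        / ((1 / (n : ℝ)) * ∑ i, m2 i (φ j)))
    (αaug : Fin d → ℝ) (hαaug : ∀ j, αaug j = (1 - δ j) * αh j + δ j * αt j)
    (baug : Z → ℝ) (hbaug : ∀ x, baug x = ∑ j, αaug j * φ j x) :
    (1 / (n : ℝ)) * ∑ i, (S i * ahat (z i) * bhat (z i) + m1 i ahat + m2 i bhat)
      = (1 / (n : ℝ)) * ∑ i, m2 i baug := by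
  set N : ℝ := 1 / (n : ℝ)
  let E := N • empiricalFunctional (fun i => S i * ahat (z i)) z
  let P := N • ∑ i, linearMapOfMapMulAdd (m2 i) (hm2 i)
  have hE (f : Z → ℝ) : E f = N * ∑ i, S i * ahat (z i) * f (z i) := by simp [E]
  have hP (f : Z → ℝ) : P f = N * ∑ i, m2 i f := by simp [P, LinearMap.sum_apply]
  have hbhat' : bhat = ∑ j, αh j • φ j := (funext hbhat).trans (linearCombination_eq_sum_smul _ _)
  have hbaug' : baug = ∑ j, ((1 - δ j) * αh j + δ j * αt j) • φ j := by
    rw [funext hbaug, linearCombination_eq_sum_smul, funext hαaug]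
  have hαt' : E (∑ j, αt j • φ j) + N * ∑ i, m1 i ahat = 0 := by
    rw [hE, ← linearCombination_eq_sum_smul, ← mul_add, ← sum_add_distrib]
    exact hαt
  have hδ' (j : Fin d) : δ j * P (φ j) = -E (φ j) := by
    simp only [hδ j, hP, hE, div_mul_cancel₀ _ (hden j), neg_mul, sum_neg_distrib, mul_neg]
  have key := add_add_eq_map_augmented E P φ _ αh αt δ hαt' hδ'
  rw [← hbhat', ← hbaug', hE, hP, hP] at key
  rw [← key, sum_add_distrib, sum_add_distrib]
  ring

theorem stmt_6 {Z : Type*} (n d : ℕ) (S : Fin n → ℝ) (z : Fin n → Z)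
    (φ : Fin d → Z → ℝ) (m1 m2 : Fin n → (Z → ℝ) → ℝ)
    (hm1 : ∀ i (c : ℝ) (f g : Z → ℝ),
      m1 i (fun x => c * f x + g x) = c * m1 i f + m1 i g)
    (hm2 : ∀ i (c : ℝ) (f g : Z → ℝ),
      m2 i (fun x => c * f x + g x) = c * m2 i f + m2 i g)
    (hden : ∀ j, (1 / (n : ℝ)) * ∑ i, m2 i (φ j) ≠ 0)
    (αh : Fin d → ℝ) (bhat : Z → ℝ) (hbhat : ∀ x, bhat x = ∑ j, αh j * φ j x)
    (ahat : Z → ℝ) (αt : Fin d → ℝ)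
    (hαt : (1 / (n : ℝ)) * ∑ i,
      (S i * ahat (z i) * (∑ j, αt j * φ j (z i)) + m1 i ahat) = 0)
    (δ : Fin d → ℝ)
    (hδ : ∀ j, δ j = ((1 / (n : ℝ)) * ∑ i, (-S i) * ahat (z i) * φ j (z i))
        / ((1 / (n : ℝ)) * ∑ i, m2 i (φ j)))
    (αaug : Fin d → ℝ) (hαaug : ∀ j, αaug j = (1 - δ j) * αh j + δ j * αt j)
    (baug : Z → ℝ) (hbaug : ∀ x, baug x = ∑ j, αaug j * φ j x) :
    (1 / (n : ℝ)) * ∑ i, (S i * ahat (z i) * bhat (z i) + m1 i ahat + m2 i bhat)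
      = (1 / (n : ℝ)) * ∑ i, m2 i baug :=
  stmt_6_general n d S z φ m1 m2 hm2 hden αh bhat hbhat ahat αt hαt δ hδ αaug hαaug baug hbaug
end

section
/- (Perfectly balanced b̂ makes the one-step estimator invariant in â over linear functions.) Suppose b̂ : Z → ℝ satisfies, for every j = 1,...,d, (1/n)∑_i (−S_i)·b̂(z_i)·φ_j(z_i) = (1/n)∑_i m1(O_i, φ_j). Then for every â that is a linear combination of the features φ_1,...,φ_d, the one-step estimator χ̂(â,b̂) equals the IPW-type estimator (1/n)∑_i m2(O_i, b̂); in particular χ̂(â,b̂) does not depend on â. -/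
private lemma lin_zero {Z : Type*} (m : (Z → ℝ) → ℝ)
    (hm : ∀ (c : ℝ) (f g : Z → ℝ), m (fun x => c * f x + g x) = c * m f + m g) :
    m (fun _ => 0) = 0 := by
  have h := hm (-1) (fun _ => 0) (fun _ => 0)
  simp at h
  linarith [h]

private lemma lin_sum {Z : Type*} {d : ℕ} (m : (Z → ℝ) → ℝ)
    (hm : ∀ (c : ℝ) (f g : Z → ℝ), m (fun x => c * f x + g x) = c * m f + m g)
    (β : Fin d → ℝ) (φ : Fin d → Z → ℝ) :
    m (fun x => ∑ j, β j * φ j x) = ∑ j, β j * m (φ j) := by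
  induction d with
  | zero => simpa using lin_zero m hm
  | succ k ih =>
    have h1 : (fun x => ∑ j : Fin (k+1), β j * φ j x)
        = fun x => β 0 * φ 0 x + ∑ j : Fin k, β j.succ * φ j.succ x := by
      funext x; rw [Fin.sum_univ_succ]
    rw [h1, hm, ih (fun j => β j.succ) (fun j => φ j.succ), Fin.sum_univ_succ]

theorem stmt_7 {Z : Type*} (n d : ℕ) (S : Fin n → ℝ) (z : Fin n → Z)
    (φ : Fin d → Z → ℝ) (m1 m2 : Fin n → (Z → ℝ) → ℝ)
    (hm1 : ∀ i (c : ℝ) (f g : Z → ℝ),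
      m1 i (fun x => c * f x + g x) = c * m1 i f + m1 i g)
    (hm2 : ∀ i (c : ℝ) (f g : Z → ℝ),
      m2 i (fun x => c * f x + g x) = c * m2 i f + m2 i g)
    (bhat : Z → ℝ)
    (hbal : ∀ j, (1 / (n : ℝ)) * ∑ i, (-S i) * bhat (z i) * φ j (z i)
      = (1 / (n : ℝ)) * ∑ i, m1 i (φ j))
    (β : Fin d → ℝ) (ahat : Z → ℝ) (hahat : ∀ x, ahat x = ∑ j, β j * φ j x) :
    (1 / (n : ℝ)) * ∑ i, (S i * ahat (z i) * bhat (z i) + m1 i ahat + m2 i bhat)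
      = (1 / (n : ℝ)) * ∑ i, m2 i bhat := by
  have hbal' : ∀ j, ∑ i, (-S i) * bhat (z i) * φ j (z i) = ∑ i, m1 i (φ j) := by
    intro j
    rcases Nat.eq_zero_or_pos n with h | h
    · subst h; simp
    · have := hbal j
      have hn : (1 / (n : ℝ)) ≠ 0 := by positivity
      exact mul_left_cancel₀ hn this
  have hkey : ∑ i, (S i * ahat (z i) * bhat (z i) + m1 i ahat) = 0 := by
    have hah : ahat = fun x => ∑ j, β j * φ j x := funext hahat
    subst hah
    have : ∀ i : Fin n, m1 i (fun x => ∑ j, β j * φ j x) = ∑ j, β j * m1 i (φ j) :=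
      fun i => lin_sum (m1 i) (hm1 i) β φ
    simp only [this]
    rw [show (∑ i, (S i * (∑ j, β j * φ j (z i)) * bhat (z i) + ∑ j, β j * m1 i (φ j)))
        = ∑ j, β j * ((∑ i, S i * φ j (z i) * bhat (z i)) + ∑ i, m1 i (φ j)) from ?_]
    · apply Finset.sum_eq_zero
      intro j _
      have := hbal' j
      have : ∑ i, S i * φ j (z i) * bhat (z i) = -∑ i, m1 i (φ j) := by
        rw [← this, ← Finset.sum_neg_distrib]
        apply Finset.sum_congr rfl; intro i _; ring
      rw [this]; ring
    · have lhs : ∑ i, ((S i * ∑ j, β j * φ j (z i)) * bhat (z i) + ∑ j, β j * m1 i (φ j))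
          = ∑ i, ∑ j, (β j * (S i * φ j (z i) * bhat (z i)) + β j * m1 i (φ j)) := by
        apply Finset.sum_congr rfl; intro i _
        rw [Finset.sum_add_distrib, Finset.mul_sum, Finset.sum_mul]
        congr 1; apply Finset.sum_congr rfl; intro j _; ring
      rw [lhs, Finset.sum_comm]
      apply Finset.sum_congr rfl; intro j _
      rw [Finset.sum_add_distrib, mul_add, Finset.mul_sum, Finset.mul_sum]
  have : ∑ i, (S i * ahat (z i) * bhat (z i) + m1 i ahat + m2 i bhat)
      = (∑ i, (S i * ahat (z i) * bhat (z i) + m1 i ahat)) + ∑ i, m2 i bhat := by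
    rw [← Finset.sum_add_distrib]
  rw [this, hkey, zero_add]
end

section
/- (Balanced b̂ collapses the three estimators.) Suppose b̂ is perfectly balanced, i.e., (1/n)∑_i (−S_i)·b̂(z_i)·φ_j(z_i) = (1/n)∑_i m1(O_i, φ_j) for all j, and let ã(z) = β̃ᵀφ(z) with β̃ satisfying (1/n)∑_i [S_i·b̂(z_i)·ã(z_i) + m2(O_i, b̂)] = 0. Then for any â linear in φ, χ̂(â,b̂) = (1/n)∑_i m2(O_i, b̂) = (1/n)∑_i m1(O_i, ã): the one-step, IPW-type, and outcome-regression estimators coincide. -/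
lemma lin_sum_aux {Z : Type*} {d : ℕ} (m : (Z → ℝ) → ℝ)
    (hm : ∀ (c : ℝ) (f g : Z → ℝ), m (fun x => c * f x + g x) = c * m f + m g)
    (c : Fin d → ℝ) (φ : Fin d → Z → ℝ) :
    m (fun x => ∑ j, c j * φ j x) = ∑ j, c j * m (φ j) := by
  have m0 : m (fun _ => 0) = 0 := by
    have h := hm 1 (fun _ => 0) (fun _ => 0)
    simp only [mul_zero, add_zero, one_mul] at h
    linarith
  induction (Finset.univ : Finset (Fin d)) using Finset.induction with
  | empty => simpa using m0
  | @insert a s hnot ih =>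
    have : (fun x => ∑ j ∈ insert a s, c j * φ j x)
        = fun x => c a * φ a x + ∑ j ∈ s, c j * φ j x := by
      funext x; rw [Finset.sum_insert hnot]
    rw [this, hm, ih, Finset.sum_insert hnot]

theorem stmt_8 {Z : Type*} (n d : ℕ) (S : Fin n → ℝ) (z : Fin n → Z)
    (φ : Fin d → Z → ℝ) (m1 m2 : Fin n → (Z → ℝ) → ℝ)
    (hm1 : ∀ i (c : ℝ) (f g : Z → ℝ),
      m1 i (fun x => c * f x + g x) = c * m1 i f + m1 i g)
    (hm2 : ∀ i (c : ℝ) (f g : Z → ℝ),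
      m2 i (fun x => c * f x + g x) = c * m2 i f + m2 i g)
    (bhat : Z → ℝ)
    (hbal : ∀ j, (1 / (n : ℝ)) * ∑ i, (-S i) * bhat (z i) * φ j (z i)
      = (1 / (n : ℝ)) * ∑ i, m1 i (φ j))
    (βt : Fin d → ℝ) (at_ : Z → ℝ) (hat : ∀ x, at_ x = ∑ j, βt j * φ j x)
    (hβt : (1 / (n : ℝ)) * ∑ i, (S i * bhat (z i) * at_ (z i) + m2 i bhat) = 0)
    (β : Fin d → ℝ) (ahat : Z → ℝ) (hahat : ∀ x, ahat x = ∑ j, β j * φ j x) :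
    (1 / (n : ℝ)) * ∑ i, (S i * ahat (z i) * bhat (z i) + m1 i ahat + m2 i bhat)
        = (1 / (n : ℝ)) * ∑ i, m2 i bhat
      ∧ (1 / (n : ℝ)) * ∑ i, m2 i bhat = (1 / (n : ℝ)) * ∑ i, m1 i at_ := by
  -- sum version of balance (works even if n = 0: both sides equal 0... need care)
  have hbal' : ∀ j, (∑ i, (-S i) * bhat (z i) * φ j (z i)) = ∑ i, m1 i (φ j) := by
    intro j
    rcases Nat.eq_zero_or_pos n with hn | hn
    · subst hn; simp
    · have h := hbal j
      have hne : (1 / (n : ℝ)) ≠ 0 := by positivity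
      exact mul_left_cancel₀ hne h
  -- m1/m2 of linear combos
  have hm1c : ∀ i (c : Fin d → ℝ), m1 i (fun x => ∑ j, c j * φ j x) = ∑ j, c j * m1 i (φ j) :=
    fun i c => lin_sum_aux (m1 i) (hm1 i) c φ
  have key : ∀ (c : Fin d → ℝ) (a : Z → ℝ), (∀ x, a x = ∑ j, c j * φ j x) →
      (∑ i, (S i * a (z i) * bhat (z i) + m1 i a)) = 0 := by
    intro c a ha
    have ha' : a = fun x => ∑ j, c j * φ j x := funext ha
    subst ha'
    have : ∀ i, S i * (∑ j, c j * φ j (z i)) * bhat (z i)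
        = ∑ j, c j * (S i * bhat (z i) * φ j (z i)) := by
      intro i
      rw [Finset.mul_sum, Finset.sum_mul]
      congr 1; funext j; ring
    simp only [this, hm1c]
    rw [Finset.sum_add_distrib, Finset.sum_comm, Finset.sum_comm (γ := Fin n)]
    rw [← Finset.sum_add_distrib]
    apply Finset.sum_eq_zero
    intro j _
    have hb := hbal' j
    rw [← Finset.mul_sum, ← Finset.mul_sum, ← mul_add]
    have : (∑ i, S i * bhat (z i) * φ j (z i)) = - ∑ i, m1 i (φ j) := by
      rw [← hb, ← Finset.sum_neg_distrib]
      congr 1; funext i; ring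
    rw [this]; ring
  constructor
  · have h1 := key β ahat hahat
    have : (∑ i, (S i * ahat (z i) * bhat (z i) + m1 i ahat + m2 i bhat))
        = (∑ i, (S i * ahat (z i) * bhat (z i) + m1 i ahat)) + ∑ i, m2 i bhat := by
      rw [← Finset.sum_add_distrib]
    rw [this, h1, zero_add]
  · have h2 := key βt at_ hat
    -- hβt : (1/n) * ∑ (S b̂ ã + m2 b̂) = 0
    have hsum : (∑ i, (S i * bhat (z i) * at_ (z i) + m2 i bhat))
        = (∑ i, S i * at_ (z i) * bhat (z i)) + ∑ i, m2 i bhat := by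
      rw [← Finset.sum_add_distrib]
      congr 1; funext i; ring
    have h2' : (∑ i, S i * at_ (z i) * bhat (z i)) = - ∑ i, m1 i at_ := by
      have := Finset.sum_add_distrib (f := fun i => S i * at_ (z i) * bhat (z i))
        (g := fun i => m1 i at_) (s := Finset.univ)
      linarith [h2, this]
    rcases Nat.eq_zero_or_pos n with hn | hn
    · subst hn; simp
    · have hne : (1 / (n : ℝ)) ≠ 0 := by positivity
      have h0 : (∑ i, (S i * bhat (z i) * at_ (z i) + m2 i bhat)) = 0 :=
        mul_left_cancel₀ hne (by rw [hβt, mul_zero])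
      rw [hsum, h2'] at h0
      have : (∑ i, m2 i bhat) = ∑ i, m1 i at_ := by linarith
      rw [this]
end

section
/- (Special case: OLS outcome regression equals AIPW, Bruns-Smith et al. Proposition 3.1.) With S_i = −1 and m2(O_i, b) = Y_i·b(z_i), suppose the Gram matrix G with G_{jk} = (1/n)∑_i φ_j(z_i)φ_k(z_i) is invertible and β̂_OLS = G⁻¹·[(1/n)∑_i Y_i φ(z_i)] is the OLS coefficient of Y on φ(Z). Then for every b̂ of the form b̂(z) = αᵀφ(z), (1/n)∑_i Y_i·b̂(z_i) = (1/n)∑_i b̂(z_i)·(β̂_OLSᵀφ(z_i)) = Φ̂ᵀβ̂_OLS with Φ̂_j = (1/n)∑_i b̂(z_i)φ_j(z_i). -/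
theorem stmt_11 {Z : Type*} (n d : ℕ) (z : Fin n → Z) (Y : Fin n → ℝ)
    (φ : Fin d → Z → ℝ)
    (G : Matrix (Fin d) (Fin d) ℝ)
    (hG : ∀ j k, G j k = (1 / (n : ℝ)) * ∑ i, φ j (z i) * φ k (z i))
    (hGinv : IsUnit G.det)
    (v : Fin d → ℝ) (hv : ∀ j, v j = (1 / (n : ℝ)) * ∑ i, Y i * φ j (z i))
    (βOLS : Fin d → ℝ) (hβ : βOLS = G⁻¹.mulVec v)
    (α : Fin d → ℝ) (bhat : Z → ℝ) (hb : ∀ x, bhat x = ∑ j, α j * φ j x)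
    (Φ : Fin d → ℝ)
    (hΦ : ∀ j, Φ j = (1 / (n : ℝ)) * ∑ i, bhat (z i) * φ j (z i)) :
    (1 / (n : ℝ)) * ∑ i, Y i * bhat (z i)
        = (1 / (n : ℝ)) * ∑ i, bhat (z i) * (∑ j, βOLS j * φ j (z i))
      ∧ (1 / (n : ℝ)) * ∑ i, Y i * bhat (z i) = ∑ j, Φ j * βOLS j := by
  have hGβ : G.mulVec βOLS = v := by
    rw [hβ, Matrix.mulVec_mulVec, Matrix.mul_nonsing_inv _ hGinv, Matrix.one_mulVec]
  have key : ∀ j, ∑ k, G j k * βOLS k = v j := by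
    intro j
    have := congrFun hGβ j
    simpa [Matrix.mulVec, dotProduct] using this
  have hΦ' : ∀ k, Φ k = ∑ j, α j * G j k := by
    intro k
    simp only [hΦ, hb, hG, Finset.mul_sum, Finset.sum_mul]
    rw [Finset.sum_comm]
    refine Finset.sum_congr rfl fun j _ => Finset.sum_congr rfl fun i _ => by ring
  have h1 : (1 / (n : ℝ)) * ∑ i, Y i * bhat (z i) = ∑ j, α j * v j := by
    simp only [hb, hv, Finset.mul_sum, Finset.sum_mul]
    rw [Finset.sum_comm]
    refine Finset.sum_congr rfl fun j _ => Finset.sum_congr rfl fun i _ => by ring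
  have h2 : (1 / (n : ℝ)) * ∑ i, bhat (z i) * (∑ j, βOLS j * φ j (z i))
      = ∑ j, Φ j * βOLS j := by
    simp only [hΦ, Finset.mul_sum, Finset.sum_mul]
    rw [Finset.sum_comm]
    refine Finset.sum_congr rfl fun j _ => Finset.sum_congr rfl fun i _ => by ring
  have h3 : ∑ j, α j * v j = ∑ j, Φ j * βOLS j := by
    simp only [hΦ', Finset.sum_mul]
    rw [Finset.sum_comm]
    refine Finset.sum_congr rfl fun j _ => ?_
    rw [← key j, Finset.mul_sum]
    exact Finset.sum_congr rfl fun k _ => by ring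
  exact ⟨h1.trans (h3.trans h2.symm), h1.trans h3⟩
end
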